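/- arXiv:2202.09055 — 2 statements merged into one kernel-verified Lean document; each statement's English description precedes it below -/
import Mathlib

section
/- For every α ∈ (0, 3/8) there exists a constant C = C(α,T) > 0 such that for all x ∈ [0,π] and all 0 ≤ s < t ≤ T, ∫_0^s ∫_0^π |ΔG_{t−r}(x,z) − ΔG_{s−r}(x,z)| dz dr ≤ C (t−s)^{α}. -/
/-- `φ_j(x) = √(2/π)·sin(jx)`. -/
noncomputable def phi (j : ℕ) (x : ℝ) : ℝ := Real.sqrt (2 / Real.pi) * Real.sin (j * x)

/-- `ΔG_t(x,y) = Σ_{j=1}^∞ (−j²) e^{−j⁴t} φ_j(x) φ_j(y)`, the Laplacian (in the first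
spatial variable) of the Green function of `∂_t + Δ²` on `(0,π)` with DBCs. -/
noncomputable def DG (t x y : ℝ) : ℝ :=
  ∑' j : ℕ, -(((j : ℝ) + 1) ^ 2) * Real.exp (-((j : ℝ) + 1) ^ 4 * t)
    * phi (j + 1) x * phi (j + 1) y

/-!
In the sine basis, `z ↦ ΔG_τ(x,z) − ΔG_σ(x,z)` has coefficients `−j²(e^{−j⁴τ} − e^{−j⁴σ})φ_j(x)`,
so by Cauchy–Schwarz and Parseval its `L¹(0,π)` norm is at most
`√(π Σ_j j⁴ (e^{−j⁴σ} − e^{−j⁴τ})²)`. Using `1 − e^{−v} ≤ v^a` on the gap and absorbing the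
powers of `j⁴σ` into half of `e^{−2j⁴σ}`, each term is `≲ (τ−σ)^{2a} σ^{−2a−1} e^{−j(σ/2)^{1/4}}`;
the geometric series contributes `σ^{−1/4}`, so the `L¹` norm is `≲ (τ−σ)^a σ^{−a−5/8}`. With
`σ = s − r`, `τ = t − r` and `a + 5/8 < 1` this is integrable in `r ∈ (0,s)`.
-/

open Real MeasureTheory

lemma continuous_phi (j : ℕ) : Continuous (phi j) := by
  unfold phi; fun_prop

lemma abs_phi_le_one (j : ℕ) (x : ℝ) : |phi j x| ≤ 1 := by
  have hsqrt : √(2 / π) ≤ 1 := sqrt_le_one.mpr ((div_le_one pi_pos).2 (by linarith [pi_gt_three]))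
  rw [phi, abs_mul, abs_of_nonneg (sqrt_nonneg _)]
  exact mul_le_one₀ hsqrt (abs_nonneg _) (abs_sin_le_one _)

lemma integral_cos_int_mul (k : ℤ) :
    ∫ z in (0 : ℝ)..π, cos (k * z) = if k = 0 then π else 0 := by
  by_cases hk : k = 0
  · simp [hk]
  · rw [intervalIntegral.integral_comp_mul_left (fun z => cos z) (Int.cast_ne_zero.2 hk)]
    simp [integral_cos, sin_int_mul_pi, hk]

lemma integral_phi_mul_phi (j k : ℕ) :
    ∫ z in (0 : ℝ)..π, phi (j + 1) z * phi (k + 1) z = if j = k then 1 else 0 := by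
  have hprod : ∀ z, phi (j + 1) z * phi (k + 1) z
      = π⁻¹ * (cos (((j - k : ℤ) : ℝ) * z) - cos (((j + k + 2 : ℤ) : ℝ) * z)) := by
    intro z
    have hsq : √(2 / π) ^ 2 = 2 / π := sq_sqrt (by positivity)
    have hdiff : ((j - k : ℤ) : ℝ) * z = (j + 1 : ℕ) * z - (k + 1 : ℕ) * z := by push_cast; ring
    have hsum : ((j + k + 2 : ℤ) : ℝ) * z = (j + 1 : ℕ) * z + (k + 1 : ℕ) * z := by push_cast; ring
    rw [hdiff, hsum, cos_sub, cos_add, phi, phi, mul_mul_mul_comm, ← sq, hsq]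
    field_simp
    ring
  have hsum_ne : (j + k + 2 : ℤ) ≠ 0 := by omega
  simp_rw [hprod]
  rw [intervalIntegral.integral_const_mul,
    intervalIntegral.integral_sub (Continuous.intervalIntegrable (by fun_prop) _ _)
      (Continuous.intervalIntegrable (by fun_prop) _ _),
    integral_cos_int_mul, integral_cos_int_mul, if_neg hsum_ne, sub_zero]
  by_cases h : j = k
  · simp [h, pi_ne_zero]
  · simp [h, sub_eq_zero]

noncomputable def sineSeries (c : ℕ → ℝ) (z : ℝ) : ℝ := ∑' j, c j * phi (j + 1) z

section SineSeries

variable {c : ℕ → ℝ}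

lemma abs_mul_phi_le (c : ℝ) (j : ℕ) (z : ℝ) : |c * phi j z| ≤ |c| := by
  rw [abs_mul]
  exact mul_le_of_le_one_right (abs_nonneg c) (abs_phi_le_one j z)

lemma summable_mul_phi (hc : Summable fun j => |c j|) (z : ℝ) :
    Summable fun j => c j * phi (j + 1) z :=
  hc.of_norm_bounded fun j => abs_mul_phi_le (c j) (j + 1) z

lemma continuous_sineSeries (hc : Summable fun j => |c j|) : Continuous (sineSeries c) :=
  continuous_tsum (fun _ => continuous_const.mul (continuous_phi _)) hc
    fun j z => abs_mul_phi_le (c j) (j + 1) z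

lemma sineSeries_sub {d : ℕ → ℝ} (hc : Summable fun j => |c j|) (hd : Summable fun j => |d j|)
    (z : ℝ) : sineSeries c z - sineSeries d z = sineSeries (c - d) z := by
  rw [sineSeries, sineSeries, ← (summable_mul_phi hc z).tsum_sub (summable_mul_phi hd z)]
  simp only [sineSeries, Pi.sub_apply, sub_mul]

lemma integral_sineSeries_mul (hc : Summable fun j => |c j|) {g : ℝ → ℝ} (hg : Continuous g) :
    ∫ z in (0 : ℝ)..π, sineSeries c z * g z
      = ∑' j, c j * ∫ z in (0 : ℝ)..π, phi (j + 1) z * g z := by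
  have hterm : ∀ j z, c j * phi (j + 1) z * g z = c j * (phi (j + 1) z * g z) :=
    fun _ _ => mul_assoc ..
  have hsum := intervalIntegral.hasSum_integral_of_dominated_convergence
    (μ := volume) (a := 0) (b := π) (F := fun j z => c j * phi (j + 1) z * g z)
    (f := fun z => sineSeries c z * g z)
    (fun j z => |c j| * |g z|)
    (fun j => ((continuous_const.mul (continuous_phi _)).mul hg).aestronglyMeasurable)
    (fun j => ae_of_all _ fun z _ => by
      rw [Real.norm_eq_abs, abs_mul]
      exact mul_le_mul_of_nonneg_right (abs_mul_phi_le _ _ _) (abs_nonneg _))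
    (ae_of_all _ fun z _ => hc.mul_right _)
    (by simp_rw [tsum_mul_right]; exact (continuous_const.mul hg.abs).intervalIntegrable _ _)
    (ae_of_all _ fun z _ => (summable_mul_phi hc z).hasSum.mul_right _)
  simp_rw [hterm, intervalIntegral.integral_const_mul] at hsum
  exact hsum.tsum_eq.symm

lemma integral_sineSeries_mul_phi (hc : Summable fun j => |c j|) (k : ℕ) :
    ∫ z in (0 : ℝ)..π, sineSeries c z * phi (k + 1) z = c k := by
  simp_rw [integral_sineSeries_mul hc (continuous_phi _), integral_phi_mul_phi, mul_ite, mul_one,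
    mul_zero, tsum_ite_eq]

lemma integral_sineSeries_sq (hc : Summable fun j => |c j|) :
    ∫ z in (0 : ℝ)..π, sineSeries c z ^ 2 = ∑' j, c j ^ 2 := by
  simp_rw [sq, integral_sineSeries_mul hc (continuous_sineSeries hc), mul_comm (phi _ _),
    integral_sineSeries_mul_phi hc]

end SineSeries

lemma integral_abs_le_sqrt_mul_integral_sq {f : ℝ → ℝ} (hf : Continuous f) {a b : ℝ} (hab : a ≤ b) :
    ∫ z in a..b, |f z| ≤ √((b - a) * ∫ z in a..b, f z ^ 2) := by
  have hfL2 : MemLp (fun z => |f z|) (ENNReal.ofReal 2) (volume.restrict (Set.Ioc a b)) := by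
    obtain ⟨C, hC⟩ :=
      isCompact_Icc.exists_bound_of_continuousOn (hf.continuousOn (s := Set.Icc a b))
    refine MemLp.of_bound hf.abs.aestronglyMeasurable C
      (ae_restrict_of_forall_mem measurableSet_Ioc fun z hz => ?_)
    simpa using hC z (Set.Ioc_subset_Icc_self hz)
  have h1L2 : MemLp (fun _ : ℝ => (1 : ℝ)) (ENNReal.ofReal 2) (volume.restrict (Set.Ioc a b)) :=
    memLp_const 1
  have := integral_mul_le_Lp_mul_Lq_of_nonneg Real.HolderConjugate.two_two
    (ae_of_all _ fun z => abs_nonneg (f z)) (ae_of_all _ fun _ => zero_le_one) hfL2 h1L2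
  simp only [mul_one, one_rpow, integral_const] at this
  rw [intervalIntegral.integral_of_le hab, intervalIntegral.integral_of_le hab,
    sqrt_mul (by linarith), mul_comm]
  simp_rw [sqrt_eq_rpow, ← rpow_natCast _ 2]
  convert this using 3 <;> simp [hab]

lemma rpow_le_one_add {v b : ℝ} (hv : 0 ≤ v) (hb0 : 0 ≤ b) (hb1 : b ≤ 1) : v ^ b ≤ 1 + v := by
  rcases le_total v 1 with h | h
  · linarith [rpow_le_one hv h hb0]
  · calc v ^ b ≤ v ^ (1 : ℝ) := rpow_le_rpow_of_exponent_le h hb1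
      _ ≤ 1 + v := by rw [rpow_one]; linarith

lemma one_sub_exp_neg_le_rpow {u a : ℝ} (hu : 0 ≤ u) (ha0 : 0 ≤ a) (ha1 : a ≤ 1) :
    1 - exp (-u) ≤ u ^ a := by
  rcases le_total u 1 with h | h
  · linarith [add_one_le_exp (-u), self_le_rpow_of_le_one hu h ha1]
  · linarith [exp_pos (-u), one_le_rpow h ha0]

lemma mul_exp_neg_le (v : ℝ) : v * exp (-v) ≤ 2 * exp (-v / 2) := by
  have hv : v ≤ 2 * exp (v / 2) := by linarith [add_one_le_exp (v / 2), exp_pos (v / 2)]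
  calc v * exp (-v) ≤ 2 * exp (v / 2) * exp (-v) := by gcongr
    _ = 2 * exp (-v / 2) := by rw [mul_assoc, ← exp_add]; ring_nf

lemma mul_sq_exp_neg_sub_exp_neg_le {A σ τ a : ℝ} (hA : 0 ≤ A) (hσ : 0 < σ) (hστ : σ ≤ τ)
    (ha0 : 0 ≤ a) (ha1 : a ≤ 1 / 2) :
    A * (exp (-(A * σ)) - exp (-(A * τ))) ^ 2
      ≤ 2 * ((τ - σ) / σ) ^ (2 * a) / σ * exp (-(A * σ) / 2) := by
  set u := A * σ with hu
  set ρ := (τ - σ) / σ with hρ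
  have hu0 : 0 ≤ u := by positivity
  have hρ0 : 0 ≤ ρ := div_nonneg (by linarith) hσ.le
  have hfactor : exp (-u) - exp (-(A * τ)) = exp (-u) * (1 - exp (-(u * ρ))) := by
    rw [mul_sub, mul_one, ← exp_add, hu, hρ]
    congr 2
    field_simp
    ring
  have hgap : 1 - exp (-(u * ρ)) ≤ (u * ρ) ^ a :=
    one_sub_exp_neg_le_rpow (by positivity) ha0 (by linarith)
  have hgap0 : 0 ≤ 1 - exp (-(u * ρ)) :=
    sub_nonneg.2 (exp_le_one_iff.2 (neg_nonpos.2 (by positivity)))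
  have hpow : u ^ (2 * a) ≤ exp u :=
    (rpow_le_one_add hu0 (by linarith) (by linarith)).trans (by linarith [add_one_le_exp u])
  have hexp : exp u * exp (-u) = 1 := by rw [← exp_add, add_neg_cancel, exp_zero]
  calc A * (exp (-u) - exp (-(A * τ))) ^ 2
      = u / σ * exp (-u) ^ 2 * (1 - exp (-(u * ρ))) ^ 2 := by
        rw [hfactor, hu]; field_simp
    _ ≤ u / σ * exp (-u) ^ 2 * ((u * ρ) ^ a) ^ 2 := by gcongr
    _ = ρ ^ (2 * a) / σ * (u ^ (2 * a) * (u * exp (-u) ^ 2)) := by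
        rw [← rpow_mul_natCast (by positivity), mul_rpow hu0 hρ0]
        ring_nf
    _ ≤ ρ ^ (2 * a) / σ * (exp u * (u * exp (-u) ^ 2)) := by gcongr
    _ = ρ ^ (2 * a) / σ * (u * exp (-u)) := by
        linear_combination (ρ ^ (2 * a) / σ * u * exp (-u)) * hexp
    _ ≤ ρ ^ (2 * a) / σ * (2 * exp (-u / 2)) :=
        mul_le_mul_of_nonneg_left (mul_exp_neg_le u) (by positivity)
    _ = 2 * ρ ^ (2 * a) / σ * exp (-u / 2) := by ring

lemma exp_neg_pow_four_mul_half_le {n σ : ℝ} (hn : 0 ≤ n) (hσ : 0 ≤ σ) :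
    exp (-(n ^ 4 * σ) / 2) ≤ exp 1 * exp (-(n * (σ / 2) ^ (1 / 4 : ℝ))) := by
  have hroot : (n ^ 4 * σ / 2) ^ (1 / 4 : ℝ) = n * (σ / 2) ^ (1 / 4 : ℝ) := by
    rw [mul_div_assoc, mul_rpow (by positivity) (by positivity), ← rpow_natCast,
      ← rpow_mul hn]
    norm_num
  have := rpow_le_one_add (v := n ^ 4 * σ / 2) (b := 1 / 4) (by positivity) (by norm_num)
    (by norm_num)
  rw [← exp_add]
  exact exp_le_exp.2 (by linarith)

lemma hasSum_exp_neg_succ_mul (c : ℝ) (hc : 0 < c) :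
    HasSum (fun j : ℕ => exp (-(((j : ℝ) + 1) * c))) (exp (-c) / (1 - exp (-c))) := by
  have hgeom := (hasSum_geometric_of_lt_one (exp_pos (-c)).le
    (exp_lt_one_iff.2 (by linarith))).mul_left (exp (-c))
  have hterm : (fun j : ℕ => exp (-(((j : ℝ) + 1) * c))) = fun j => exp (-c) * exp (-c) ^ j := by
    ext j
    rw [← exp_nat_mul, ← exp_add]
    ring_nf
  rwa [hterm, div_eq_mul_inv]

lemma tsum_exp_neg_succ_mul_le {c : ℝ} (hc : 0 < c) :
    ∑' j : ℕ, exp (-(((j : ℝ) + 1) * c)) ≤ 1 / c := by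
  rw [(hasSum_exp_neg_succ_mul c hc).tsum_eq,
    show exp (-c) / (1 - exp (-c)) = 1 / (exp c - 1) by rw [exp_neg]; field_simp]
  exact one_div_le_one_div_of_le hc (by linarith [add_one_le_exp c])

noncomputable def DGCoeff (t x : ℝ) (j : ℕ) : ℝ :=
  -(((j : ℝ) + 1) ^ 2) * exp (-((j : ℝ) + 1) ^ 4 * t) * phi (j + 1) x

lemma DG_eq_sineSeries (t x : ℝ) : DG t x = sineSeries (DGCoeff t x) := rfl

lemma summable_abs_DGCoeff {t : ℝ} (ht : 0 < t) (x : ℝ) : Summable fun j => |DGCoeff t x j| := by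
  have hdom := (summable_nat_add_iff 1).2 (summable_pow_mul_exp_neg_nat_mul 2 ht)
  refine hdom.of_nonneg_of_le (fun j => abs_nonneg _) fun j => ?_
  have hn : (1 : ℝ) ≤ (j : ℝ) + 1 := by linarith [(Nat.cast_nonneg j : (0 : ℝ) ≤ j)]
  rw [DGCoeff, abs_mul, abs_mul, abs_neg, abs_of_nonneg (by positivity), abs_of_pos (exp_pos _)]
  push_cast
  calc ((j : ℝ) + 1) ^ 2 * exp (-((j : ℝ) + 1) ^ 4 * t) * |phi (j + 1) x|
      ≤ ((j : ℝ) + 1) ^ 2 * exp (-((j : ℝ) + 1) ^ 4 * t) :=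
        mul_le_of_le_one_right (by positivity) (abs_phi_le_one _ _)
    _ ≤ ((j : ℝ) + 1) ^ 2 * exp (-t * ((j : ℝ) + 1)) := by
        refine mul_le_mul_of_nonneg_left (exp_le_exp.2 ?_) (by positivity)
        nlinarith [pow_le_pow_right₀ hn (show 1 ≤ 4 by norm_num)]

lemma sq_DGCoeff_sub_le {σ τ a : ℝ} (hσ : 0 < σ) (hστ : σ ≤ τ) (ha0 : 0 ≤ a) (ha1 : a ≤ 1 / 2)
    (x : ℝ) (j : ℕ) :
    (DGCoeff τ x j - DGCoeff σ x j) ^ 2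
      ≤ 2 * exp 1 * ((τ - σ) / σ) ^ (2 * a) / σ
          * exp (-(((j : ℝ) + 1) * (σ / 2) ^ (1 / 4 : ℝ))) := by
  set n : ℝ := (j : ℝ) + 1
  have hn : 0 ≤ n := by positivity
  have hphi : phi (j + 1) x ^ 2 ≤ 1 := by
    rw [← sq_abs]; exact pow_le_one₀ (abs_nonneg _) (abs_phi_le_one _ _)
  calc (DGCoeff τ x j - DGCoeff σ x j) ^ 2
      = n ^ 4 * (exp (-(n ^ 4 * σ)) - exp (-(n ^ 4 * τ))) ^ 2 * phi (j + 1) x ^ 2 := by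
        simp only [DGCoeff, neg_mul]; ring
    _ ≤ n ^ 4 * (exp (-(n ^ 4 * σ)) - exp (-(n ^ 4 * τ))) ^ 2 :=
        mul_le_of_le_one_right (by positivity) hphi
    _ ≤ 2 * ((τ - σ) / σ) ^ (2 * a) / σ * exp (-(n ^ 4 * σ) / 2) :=
        mul_sq_exp_neg_sub_exp_neg_le (by positivity) hσ hστ ha0 ha1
    _ ≤ 2 * ((τ - σ) / σ) ^ (2 * a) / σ * (exp 1 * exp (-(n * (σ / 2) ^ (1 / 4 : ℝ)))) := by
        gcongr; exact exp_neg_pow_four_mul_half_le hn hσ.le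
    _ = _ := by ring

lemma tsum_sq_DGCoeff_sub_le {σ τ a : ℝ} (hσ : 0 < σ) (hστ : σ ≤ τ) (ha0 : 0 ≤ a)
    (ha1 : a ≤ 1 / 2) (x : ℝ) :
    ∑' j, (DGCoeff τ x j - DGCoeff σ x j) ^ 2
      ≤ 2 * exp 1 * ((τ - σ) / σ) ^ (2 * a) / σ / (σ / 2) ^ (1 / 4 : ℝ) := by
  have hc : 0 < (σ / 2) ^ (1 / 4 : ℝ) := by positivity
  have hdom := (hasSum_exp_neg_succ_mul _ hc).summable.mul_left
    (2 * exp 1 * ((τ - σ) / σ) ^ (2 * a) / σ)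
  calc ∑' j, (DGCoeff τ x j - DGCoeff σ x j) ^ 2
      ≤ ∑' j : ℕ, 2 * exp 1 * ((τ - σ) / σ) ^ (2 * a) / σ
          * exp (-(((j : ℝ) + 1) * (σ / 2) ^ (1 / 4 : ℝ))) :=
        Summable.tsum_le_tsum (sq_DGCoeff_sub_le hσ hστ ha0 ha1 x)
          (hdom.of_nonneg_of_le (fun _ => sq_nonneg _) (sq_DGCoeff_sub_le hσ hστ ha0 ha1 x)) hdom
    _ ≤ 2 * exp 1 * ((τ - σ) / σ) ^ (2 * a) / σ * (1 / (σ / 2) ^ (1 / 4 : ℝ)) := by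
        rw [tsum_mul_left]
        exact mul_le_mul_of_nonneg_left (tsum_exp_neg_succ_mul_le hc) (by positivity)
    _ = _ := by ring

lemma integral_abs_DG_sub_le {σ τ a : ℝ} (hσ : 0 < σ) (hστ : σ ≤ τ) (ha0 : 0 ≤ a)
    (ha1 : a ≤ 1 / 2) (x : ℝ) :
    ∫ z in (0 : ℝ)..π, |DG τ x z - DG σ x z|
      ≤ √(2 * π * exp 1 * 2 ^ (1 / 4 : ℝ)) * (τ - σ) ^ a * σ ^ (-(a + 5 / 8)) := by
  have hτσ := summable_abs_DGCoeff (hσ.trans_le hστ) x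
  have hσσ := summable_abs_DGCoeff hσ x
  have hsum : Summable fun j => |(DGCoeff τ x - DGCoeff σ x) j| :=
    (hτσ.add hσσ).of_nonneg_of_le (fun _ => abs_nonneg _) fun j => abs_sub _ _
  have hδ : 0 ≤ τ - σ := by linarith
  have hrpow : π * (2 * exp 1 * ((τ - σ) / σ) ^ (2 * a) / σ / (σ / 2) ^ (1 / 4 : ℝ))
      = 2 * π * exp 1 * 2 ^ (1 / 4 : ℝ) * ((τ - σ) ^ a * σ ^ (-(a + 5 / 8))) ^ 2 := by
    have hsq : ((τ - σ) ^ a * σ ^ (-(a + 5 / 8))) ^ 2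
        = (τ - σ) ^ (2 * a) / (σ ^ (2 * a) * σ * σ ^ (1 / 4 : ℝ)) := by
      rw [mul_pow, ← rpow_mul_natCast hδ, ← rpow_mul_natCast hσ.le, ← rpow_add_one hσ.ne',
        ← rpow_add hσ, div_eq_mul_inv ((τ - σ) ^ (2 * a)), ← rpow_neg hσ.le]
      ring_nf
    rw [hsq, div_rpow hδ hσ.le, div_rpow hσ.le zero_le_two]
    have : (0:ℝ) < σ ^ (2 * a) := by positivity
    have : (0:ℝ) < σ ^ (1 / 4 : ℝ) := by positivity
    field_simp
  simp_rw [DG_eq_sineSeries, sineSeries_sub hτσ hσσ]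
  calc ∫ z in (0 : ℝ)..π, |sineSeries (DGCoeff τ x - DGCoeff σ x) z|
      ≤ √((π - 0) * ∫ z in (0 : ℝ)..π, sineSeries (DGCoeff τ x - DGCoeff σ x) z ^ 2) :=
        integral_abs_le_sqrt_mul_integral_sq (continuous_sineSeries hsum) pi_pos.le
    _ ≤ √(π * (2 * exp 1 * ((τ - σ) / σ) ^ (2 * a) / σ / (σ / 2) ^ (1 / 4 : ℝ))) := by
        rw [integral_sineSeries_sq hsum, sub_zero]
        gcongr
        exact tsum_sq_DGCoeff_sub_le hσ hστ ha0 ha1 x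
    _ = _ := by
        rw [hrpow, sqrt_mul (by positivity), sqrt_sq (by positivity)]
        ring

lemma integral_le_of_le_mul_rpow_sub {F : ℝ → ℝ} {s γ K : ℝ} (hs : 0 ≤ s) (hγ : γ < 1)
    (hK : 0 ≤ K) (hF : ∀ r ∈ Set.Ioo 0 s, F r ≤ K * (s - r) ^ (-γ)) :
    ∫ r in (0 : ℝ)..s, F r ≤ K * (s ^ (1 - γ) / (1 - γ)) := by
  have hint : IntervalIntegrable (fun r => K * (s - r) ^ (-γ)) volume 0 s := by
    have hpow := intervalIntegral.intervalIntegrable_rpow' (a := s) (b := 0) (r := -γ) (by linarith)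
    simpa using (hpow.comp_sub_left s).const_mul K
  have hval : ∫ r in (0 : ℝ)..s, K * (s - r) ^ (-γ) = K * (s ^ (1 - γ) / (1 - γ)) := by
    rw [intervalIntegral.integral_const_mul,
      intervalIntegral.integral_comp_sub_left (fun u => u ^ (-γ)), sub_self, sub_zero,
      integral_rpow (Or.inl (by linarith)), zero_rpow (by linarith), neg_add_eq_sub, sub_zero]
  by_cases hFint : IntervalIntegrable F volume 0 s
  · exact hval ▸ intervalIntegral.integral_mono_on_of_le_Ioo hs hFint hint hF
  · rw [intervalIntegral.integral_undef hFint]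
    positivity

/-- For every `α ∈ (0, 3/8)` there is `C = C(α,T) > 0` such that for all `x ∈ [0,π]`
and `0 ≤ s < t ≤ T`,
`∫_0^s ∫_0^π |ΔG_{t−r}(x,z) − ΔG_{s−r}(x,z)| dz dr ≤ C(t−s)^α`. -/
theorem stmt7 (T : ℝ) (hT : 0 < T) (α : ℝ) (hα : α ∈ Set.Ioo (0 : ℝ) (3 / 8)) :
    ∃ C : ℝ, 0 < C ∧ ∀ x ∈ Set.Icc (0 : ℝ) Real.pi, ∀ s t : ℝ, 0 ≤ s → s < t → t ≤ T →
      (∫ r in (0 : ℝ)..s, ∫ z in (0 : ℝ)..Real.pi,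
        |DG (t - r) x z - DG (s - r) x z|) ≤ C * (t - s) ^ α := by
  obtain ⟨hα0, hα1⟩ := hα
  set K := √(2 * π * exp 1 * 2 ^ (1 / 4 : ℝ))
  set γ := α + 5 / 8 with hγ_def
  have hγ : 0 < 1 - γ := by linarith
  refine ⟨K * (T ^ (1 - γ) / (1 - γ)), by positivity, fun x _ s t hs hst htT => ?_⟩
  calc ∫ r in (0 : ℝ)..s, ∫ z in (0 : ℝ)..π, |DG (t - r) x z - DG (s - r) x z|
      ≤ K * (t - s) ^ α * (s ^ (1 - γ) / (1 - γ)) :=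
        integral_le_of_le_mul_rpow_sub hs (by linarith) (by positivity) fun r hr => by
          simpa only [sub_sub_sub_cancel_right] using
            integral_abs_DG_sub_le (σ := s - r) (τ := t - r) (sub_pos.2 hr.2) (by linarith)
              hα0.le (by linarith) x
    _ ≤ K * (T ^ (1 - γ) / (1 - γ)) * (t - s) ^ α := by
        rw [mul_right_comm]
        gcongr
        linarith
end

section
/- For every ε ∈ (0,1) there exists a constant C_ε > 0 (depending only on ε and T, not on n) such that for every integer n ≥ 2, every t ∈ (0,T], and all x, y ∈ [0,π], |G^n_t(x,y)| ≤ C_ε t^{−1/4−ε} and |Δ_n G^n_t(x,y)| ≤ C_ε t^{−3/4−ε}. -/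
/-- `λ_{j,n} = −j²·c_{j,n}` with `c_{j,n} = sin²(jπ/(2n))/(jπ/(2n))²`. -/
noncomputable def lam (n j : ℕ) : ℝ :=
  -((j : ℝ) ^ 2) * (Real.sin ((j : ℝ) * Real.pi / (2 * n)) ^ 2
    / ((j : ℝ) * Real.pi / (2 * n)) ^ 2)

/-- `κ_n(y) = h⌊y/h⌋` with `h = π/n`. -/
noncomputable def kappa (n : ℕ) (y : ℝ) : ℝ :=
  (Real.pi / n) * (⌊y / (Real.pi / n)⌋ : ℝ)

/-- Piecewise linear interpolant of `φ_j` on the grid `{kπ/n}`. -/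
noncomputable def phiI (n j : ℕ) (x : ℝ) : ℝ :=
  phi j (kappa n x) + ((n : ℝ) * x / Real.pi - (⌊x / (Real.pi / n)⌋ : ℝ))
    * (phi j (kappa n x + Real.pi / n) - phi j (kappa n x))

/-- Discrete Green function `G^n_t(x,y) = Σ_{j=1}^{n−1} e^{−λ_{j,n}²t} φ_{j,n}(x) φ_j(κ_n(y))`. -/
noncomputable def Gn (n : ℕ) (t x y : ℝ) : ℝ :=
  ∑ j ∈ Finset.Icc 1 (n - 1),
    Real.exp (-(lam n j) ^ 2 * t) * phiI n j x * phi j (kappa n y)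

/-- `Δ_n G^n_t(x,y) = Σ_{j=1}^{n−1} λ_{j,n} e^{−λ_{j,n}²t} φ_{j,n}(x) φ_j(κ_n(y))`. -/
noncomputable def DGn (n : ℕ) (t x y : ℝ) : ℝ :=
  ∑ j ∈ Finset.Icc 1 (n - 1),
    lam n j * Real.exp (-(lam n j) ^ 2 * t) * phiI n j x * phi j (kappa n y)

/-! The `j`-th term of either sum is at most `(2/π) |λ_{j,n}|^m e^{-λ_{j,n}² t}` (`m = 0` for
`G^n`, `m = 1` for `Δ_n G^n`). Jordan's inequality `sin u ≥ 2u/π` on `[0, π/2]` gives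
`|λ_{j,n}| ≥ (2j/π)²` uniformly in `n`, and `e^{-s} ≤ 2 s^{-p}` for `0 ≤ p ≤ 2`. With
`p = (2m+1)/4 + ε` the `j`-th term is therefore `O(j^{-1-4ε} t^{-p})`, summable in `j` with a sum
independent of `n`. -/

open Real Finset
open scoped Nat

theorem exp_neg_le_factorial_mul_rpow_neg {u p : ℝ} (hu : 0 < u) (hp : 0 ≤ p) {k : ℕ}
    (hpk : p ≤ k) : exp (-u) ≤ k ! * u ^ (-p) := by
  have hk : (1 : ℝ) ≤ k ! := by exact_mod_cast Nat.factorial_pos k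
  rcases le_or_gt u 1 with hu1 | hu1
  · calc exp (-u) ≤ 1 := exp_le_one_iff.2 (by linarith)
      _ ≤ u ^ (-p) := one_le_rpow_of_pos_of_le_one_of_nonpos hu hu1 (by linarith)
      _ ≤ k ! * u ^ (-p) := le_mul_of_one_le_left (by positivity) hk
  · calc exp (-u) ≤ k ! * u ^ (-(k : ℝ)) := by
          have h := pow_div_factorial_le_exp u hu.le k
          rw [div_le_iff₀ (by positivity)] at h
          rw [exp_neg, rpow_neg hu.le, rpow_natCast, ← div_eq_mul_inv,
            le_div_iff₀ (by positivity), inv_mul_le_iff₀ (exp_pos u)]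
          linarith
      _ ≤ k ! * u ^ (-p) := by
          gcongr
          exact hu1.le

theorem abs_phi_le (j : ℕ) (z : ℝ) : |phi j z| ≤ √(2 / π) := by
  rw [phi, abs_mul, abs_of_nonneg (sqrt_nonneg _)]
  exact mul_le_of_le_one_right (sqrt_nonneg _) (abs_sin_le_one _)

theorem abs_phiI_le (n j : ℕ) (x : ℝ) : |phiI n j x| ≤ √(2 / π) := by
  set θ : ℝ := n * x / π - ⌊x / (π / n)⌋ with hθ
  have hθ_eq : θ = Int.fract (x / (π / n)) := by
    rw [hθ, Int.fract, div_div_eq_mul_div, mul_comm]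
  have hθ0 : 0 ≤ θ := hθ_eq ▸ Int.fract_nonneg _
  have hθ1 : θ ≤ 1 := hθ_eq ▸ (Int.fract_lt_one _).le
  have h₀ := abs_phi_le j (kappa n x)
  have h₁ := abs_phi_le j (kappa n x + π / n)
  have hconv : phiI n j x = (1 - θ) * phi j (kappa n x) + θ * phi j (kappa n x + π / n) := by
    rw [phiI]; ring
  rw [hconv]
  calc _ ≤ (1 - θ) * |phi j (kappa n x)| + θ * |phi j (kappa n x + π / n)| := by
        refine (abs_add_le _ _).trans_eq ?_
        rw [abs_mul, abs_mul, abs_of_nonneg (by linarith), abs_of_nonneg hθ0]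
    _ ≤ (1 - θ) * √(2 / π) + θ * √(2 / π) := by gcongr
    _ = √(2 / π) := by ring

theorem abs_lam_le_sq (n j : ℕ) : |lam n j| ≤ (j : ℝ) ^ 2 := by
  set u : ℝ := j * π / (2 * n)
  rw [lam, abs_mul, abs_neg, abs_of_nonneg (by positivity), abs_of_nonneg (by positivity)]
  exact mul_le_of_le_one_right (by positivity) (div_le_one_of_le₀ sin_sq_le_sq (sq_nonneg u))

theorem sq_mul_le_neg_lam {n j : ℕ} (hj : 0 < j) (hjn : j ≤ n) :
    (2 / π * j) ^ 2 ≤ -lam n j := by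
  have hj' : (0 : ℝ) < j := by exact_mod_cast hj
  have hn : (0 : ℝ) < n := by exact_mod_cast hj.trans_le hjn
  set u : ℝ := j * π / (2 * n) with hu
  have hu0 : 0 < u := by positivity
  have hu_le : u ≤ π / 2 := by
    rw [hu, div_le_div_iff₀ (by positivity) two_pos]
    have : (j : ℝ) ≤ n := by exact_mod_cast hjn
    nlinarith [pi_pos]
  have hjordan : (2 / π * u) ^ 2 ≤ sin u ^ 2 :=
    pow_le_pow_left₀ (by positivity) (mul_le_sin hu0.le hu_le) 2
  have hneg : -lam n j = (j : ℝ) ^ 2 * (sin u ^ 2 / u ^ 2) := by rw [lam]; ring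
  rw [hneg, mul_pow, mul_comm ((2 / π) ^ 2)]
  gcongr
  rw [le_div_iff₀ (by positivity), ← mul_pow]
  exact hjordan

theorem abs_lam_pow_mul_exp_le (m k : ℕ) {n j : ℕ} (hj : 0 < j) (hjn : j ≤ n) {t p : ℝ}
    (ht : 0 < t) (hp : 0 ≤ p) (hpk : p ≤ k) :
    |lam n j| ^ m * exp (-lam n j ^ 2 * t)
      ≤ k ! * (2 / π) ^ (-4 * p) * (j : ℝ) ^ (2 * m - 4 * p) * t ^ (-p) := by
  have hj' : (0 : ℝ) < j := by exact_mod_cast hj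
  have hc : (0 : ℝ) < 2 / π := by positivity
  have hc4 : 0 < (2 / π * j) ^ 4 := by have := mul_pos hc hj'; positivity
  have hlam : (2 / π * j) ^ 4 ≤ lam n j ^ 2 := by
    rw [show (4 : ℕ) = 2 * 2 by rfl, pow_mul, ← neg_sq (lam n j)]
    exact pow_le_pow_left₀ (by positivity) (sq_mul_le_neg_lam hj hjn) 2
  have hexp : exp (-lam n j ^ 2 * t) ≤ k ! * ((2 / π * j) ^ 4 * t) ^ (-p) :=
    calc exp (-lam n j ^ 2 * t) = exp (-(lam n j ^ 2 * t)) := by rw [neg_mul]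
      _ ≤ k ! * (lam n j ^ 2 * t) ^ (-p) :=
        exp_neg_le_factorial_mul_rpow_neg (mul_pos (hc4.trans_le hlam) ht) hp hpk
      _ ≤ k ! * ((2 / π * j) ^ 4 * t) ^ (-p) := by
        gcongr k ! * ?_
        exact rpow_le_rpow_of_nonpos (mul_pos hc4 ht) (by gcongr) (by linarith)
  have hsplit : ((2 / π * j) ^ 4 * t) ^ (-p)
      = (2 / π) ^ (-4 * p) * (j : ℝ) ^ (-4 * p) * t ^ (-p) := by
    rw [mul_rpow (by positivity) ht.le, ← rpow_natCast, ← rpow_mul (by positivity),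
      mul_rpow hc.le hj'.le]
    push_cast; ring_nf
  have hpow : |lam n j| ^ m ≤ (j : ℝ) ^ (2 * m : ℝ) := by
    rw [rpow_mul hj'.le, rpow_ofNat, rpow_natCast]
    exact pow_le_pow_left₀ (abs_nonneg _) (abs_lam_le_sq n j) m
  calc |lam n j| ^ m * exp (-lam n j ^ 2 * t)
      ≤ (j : ℝ) ^ (2 * m : ℝ) * (k ! * ((2 / π * j) ^ 4 * t) ^ (-p)) := by gcongr
    _ = k ! * (2 / π) ^ (-4 * p) * (j : ℝ) ^ (2 * m - 4 * p) * t ^ (-p) := by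
      rw [hsplit, sub_eq_add_neg, rpow_add hj', ← neg_mul]; ring

theorem abs_sum_lam_pow_mul_exp_le (m k : ℕ) {p δ : ℝ} (hp : 0 ≤ p) (hpk : p ≤ k)
    (hδ : 0 < δ) (hmp : 2 * m - 4 * p = -(1 + δ)) (n : ℕ) {t : ℝ} (ht : 0 < t) (x y : ℝ) :
    |∑ j ∈ Icc 1 (n - 1), lam n j ^ m * exp (-lam n j ^ 2 * t) * phiI n j x * phi j (kappa n y)|
      ≤ 2 / π * k ! * (2 / π) ^ (-4 * p) * (∑' j : ℕ, (j : ℝ) ^ (-(1 + δ))) * t ^ (-p) := by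
  have hsummable : Summable fun j : ℕ ↦ (j : ℝ) ^ (-(1 + δ)) :=
    summable_nat_rpow.2 (by linarith)
  have hterm : ∀ j ∈ Icc 1 (n - 1),
      |lam n j ^ m * exp (-lam n j ^ 2 * t) * phiI n j x * phi j (kappa n y)|
        ≤ 2 / π * (k ! * (2 / π) ^ (-4 * p) * (j : ℝ) ^ (-(1 + δ)) * t ^ (-p)) := by
    intro j hj
    obtain ⟨hj1, hjn⟩ := mem_Icc.1 hj
    rw [abs_mul, abs_mul, abs_mul, abs_pow, abs_of_pos (exp_pos _)]
    have hlam := abs_lam_pow_mul_exp_le m k hj1 (by omega : j ≤ n) ht hp hpk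
    rw [hmp] at hlam
    calc _ ≤ |lam n j| ^ m * exp (-lam n j ^ 2 * t) * √(2 / π) * √(2 / π) := by
          gcongr
          · exact abs_phiI_le n j x
          · exact abs_phi_le j _
      _ = 2 / π * (|lam n j| ^ m * exp (-lam n j ^ 2 * t)) := by
          rw [mul_assoc, mul_self_sqrt (by positivity), mul_comm]
      _ ≤ _ := by gcongr
  calc _ ≤ ∑ j ∈ Icc 1 (n - 1),
        |lam n j ^ m * exp (-lam n j ^ 2 * t) * phiI n j x * phi j (kappa n y)| :=
        abs_sum_le_sum_abs _ _
    _ ≤ ∑ j ∈ Icc 1 (n - 1),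
        2 / π * (k ! * (2 / π) ^ (-4 * p) * (j : ℝ) ^ (-(1 + δ)) * t ^ (-p)) := sum_le_sum hterm
    _ = 2 / π * k ! * (2 / π) ^ (-4 * p) * (∑ j ∈ Icc 1 (n - 1), (j : ℝ) ^ (-(1 + δ)))
        * t ^ (-p) := by rw [mul_sum, sum_mul]; exact sum_congr rfl fun j _ ↦ by ring
    _ ≤ _ := by
      gcongr
      exact hsummable.sum_le_tsum _ fun j _ ↦ by positivity

theorem stmt10_general (T : ℝ) (ε : ℝ) (hε : ε ∈ Set.Ioo (0 : ℝ) 1) :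
    ∃ C : ℝ, 0 < C ∧ ∀ n : ℕ, 2 ≤ n → ∀ t ∈ Set.Ioc (0 : ℝ) T,
      ∀ x ∈ Set.Icc (0 : ℝ) Real.pi, ∀ y ∈ Set.Icc (0 : ℝ) Real.pi,
      |Gn n t x y| ≤ C * t ^ (-(1 / 4 : ℝ) - ε)
      ∧ |DGn n t x y| ≤ C * t ^ (-(3 / 4 : ℝ) - ε) := by
  obtain ⟨hε0, hε1⟩ := hε
  set S := ∑' j : ℕ, (j : ℝ) ^ (-(1 + 4 * ε))
  have hS : 0 < S :=
    (summable_nat_rpow.2 (by linarith)).tsum_pos (fun j ↦ by positivity) 1 (by norm_num)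
  set C₀ := 2 / π * (2 ! : ℕ) * (2 / π) ^ (-4 * (1 / 4 + ε)) * S
  set C₁ := 2 / π * (2 ! : ℕ) * (2 / π) ^ (-4 * (3 / 4 + ε)) * S
  have hC₀ : 0 < C₀ := by positivity
  have hC₁ : 0 < C₁ := by positivity
  refine ⟨C₀ + C₁, by positivity, fun n _ t ⟨ht, _⟩ x _ y _ ↦ ?_⟩
  have hG := abs_sum_lam_pow_mul_exp_le 0 2 (p := 1 / 4 + ε) (δ := 4 * ε) (by linarith)
    (by push_cast; linarith) (by linarith) (by push_cast; ring) n ht x y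
  have hDG := abs_sum_lam_pow_mul_exp_le 1 2 (p := 3 / 4 + ε) (δ := 4 * ε) (by linarith)
    (by push_cast; linarith) (by linarith) (by push_cast; ring) n ht x y
  simp only [pow_zero, one_mul] at hG
  simp only [pow_one] at hDG
  rw [show -(1 / 4 : ℝ) - ε = -(1 / 4 + ε) by ring, show -(3 / 4 : ℝ) - ε = -(3 / 4 + ε) by ring]
  exact ⟨hG.trans (mul_le_mul_of_nonneg_right (le_add_of_nonneg_right hC₁.le) (by positivity)),
    hDG.trans (mul_le_mul_of_nonneg_right (le_add_of_nonneg_left hC₀.le) (by positivity))⟩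

/-- For every `ε ∈ (0,1)` there is `C_ε > 0` (independent of `n`) such that for every
`n ≥ 2`, `t ∈ (0,T]`, `x, y ∈ [0,π]`:
`|G^n_t(x,y)| ≤ C_ε t^{−1/4−ε}` and `|Δ_n G^n_t(x,y)| ≤ C_ε t^{−3/4−ε}`. -/
theorem stmt10 (T : ℝ) (hT : 0 < T) (ε : ℝ) (hε : ε ∈ Set.Ioo (0 : ℝ) 1) :
    ∃ C : ℝ, 0 < C ∧ ∀ n : ℕ, 2 ≤ n → ∀ t ∈ Set.Ioc (0 : ℝ) T,
      ∀ x ∈ Set.Icc (0 : ℝ) Real.pi, ∀ y ∈ Set.Icc (0 : ℝ) Real.pi,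
      |Gn n t x y| ≤ C * t ^ (-(1 / 4 : ℝ) - ε)
      ∧ |DGn n t x y| ≤ C * t ^ (-(3 / 4 : ℝ) - ε) :=
  stmt10_general T ε hε
end
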